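/- Let n ≥ 1 and let K be a field of characteristic zero. In the cochain complex (C^•, d) of ordered partitions of {1,…,n}, for every permutation σ ∈ S_n the class of the singleton ordered partition ({σ(1)}, {σ(2)}, …, {σ(n)}) in C^n / im(d : C^{n−1} → C^n) equals sgn(σ) times the class of ({1}, {2}, …, {n}). -/

import Mathlib

/-!
The cochain complex of ordered partitions of `{1,…,n}` (the multidegree-`(1,…,1)` part of
the cobar construction of the polynomial coalgebra `K[t₁,…,tₙ]`).

An ordered partition of `{1,…,n}` (modeled on `Fin n`) into `k` blocks is a tuple
`(B₁,…,B_k)` of pairwise disjoint nonempty subsets covering `{1,…,n}`; equivalently,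
every block is nonempty and every element lies in exactly one block.
-/

/-- `B : Fin k → Finset (Fin n)` is an ordered partition: all blocks are nonempty and
every element of `{1,…,n}` lies in exactly one block (this encodes pairwise disjointness
together with the covering property). -/
def IsOrderedPartition (n k : ℕ) (B : Fin k → Finset (Fin n)) : Prop :=
  (∀ i, (B i).Nonempty) ∧ ∀ x : Fin n, ∃! i, x ∈ B i

/-- The set of ordered partitions of `{1,…,n}` into `k` blocks. -/
def OrderedPartition (n k : ℕ) : Type :=
  {B : Fin k → Finset (Fin n) // IsOrderedPartition n k B}

/-- `C^k`, the free `K`-vector space on the set of ordered partitions of `{1,…,n}`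
into `k` blocks. -/
abbrev OPC (K : Type*) [Field K] (n k : ℕ) : Type _ :=
  OrderedPartition n k →₀ K

/-- Replace the `i`-th block of the tuple `B` by the two consecutive blocks `A`, `A'`
(at positions `i` and `i+1`), shifting the later blocks by one. -/
def splitBlocks {n k : ℕ} (B : Fin k → Finset (Fin n)) (i : Fin k)
    (A A' : Finset (Fin n)) : Fin (k + 1) → Finset (Fin n) :=
  Function.update (i.succ.insertNth A' B) i.castSucc A

open Classical in
/-- The differential `d : C^k → C^{k+1}`.  On a basis ordered partition `(B₁,…,B_k)` it is
`d(B₁,…,B_k) = Σ_{i} (−1)^{i} Σ_{(A,A')} (B₁,…,B_{i−1}, A, A', B_{i+1},…,B_k)`, the inner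
sum running over all ordered pairs `(A, A')` of disjoint nonempty subsets with
`A ∪ A' = B_i` (such a pair is the same as a subset `A ⊆ B_i` with `A' = B_i \ A`;
the resulting tuple is an ordered partition exactly when both `A` and `A'` are nonempty,
which is what the `dite` below selects).  Here `i` runs over `Fin k` (zero-based), so the
sign `(−1)^i` matches the one-based sign `(−1)^{i−1}` of the informal statement. -/
noncomputable def dOP (K : Type*) [Field K] (n k : ℕ) :
    OPC K n k →ₗ[K] OPC K n (k + 1) :=
  Finsupp.lsum K fun B => LinearMap.toSpanSingleton K _ <|
    ∑ i : Fin k, ∑ A ∈ (B.1 i).powerset,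
      if h : IsOrderedPartition n (k + 1) (splitBlocks B.1 i A (B.1 i \ A)) then
        ((-1 : K) ^ (i : ℕ)) • Finsupp.single (⟨_, h⟩ : OrderedPartition n (k + 1)) (1 : K)
      else 0

/-- The ordered partition `({σ(1)}, {σ(2)}, …, {σ(n)})` of `{1,…,n}` into singletons. -/
def singletonOP (n : ℕ) (σ : Equiv.Perm (Fin n)) : OrderedPartition n n :=
  ⟨fun j => {σ j}, fun i => Finset.singleton_nonempty _, fun x =>
    ⟨σ.symm x, by simp, fun i hi => by
      simp only [Finset.mem_singleton] at hi
      rw [hi]; simp⟩⟩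


/-!
Let `P` be the partition obtained from `({σ 0}, …, {σ m})` by merging the blocks at positions
`j` and `j + 1`. Its singleton blocks admit no splitting into two nonempty parts, so `d P` comes
only from the doubleton `{σ j, σ (j + 1)}` and equals `±` the sum of the classes of `σ` and of
`σ * swap j (j + 1)`. Hence modulo `im d` the class of `σ` changes sign under each adjacent
transposition, and these generate `S_n`.
-/

open Equiv Finset

theorem Fin.predAbove_eq_iff_of_ne {m : ℕ} {i j : Fin m} (h : i ≠ j) {y : Fin (m + 1)} :
    j.predAbove y = i ↔ y = j.succ.succAbove i := by
  simp only [ne_eq, Fin.ext_iff, Fin.predAbove, Fin.succAbove, Fin.lt_def, Fin.val_castSucc,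
    Fin.val_succ] at h ⊢
  split_ifs <;> simp only [Fin.val_castSucc, Fin.val_succ, Fin.val_pred, Fin.coe_castPred] <;> omega

theorem Fin.predAbove_eq_self_iff {m : ℕ} {j : Fin m} {y : Fin (m + 1)} :
    j.predAbove y = j ↔ y = j.castSucc ∨ y = j.succ := by
  simp only [Fin.ext_iff, Fin.predAbove, Fin.lt_def, Fin.val_castSucc, Fin.val_succ]
  split_ifs <;> simp only [Fin.val_pred, Fin.coe_castPred] <;> omega

theorem Fin.predAbove_swap_castSucc_succ {m : ℕ} (j : Fin m) (y : Fin (m + 1)) :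
    j.predAbove (swap j.castSucc j.succ y) = j.predAbove y := by
  rcases eq_or_ne y j.castSucc with rfl | h₁
  · simp
  rcases eq_or_ne y j.succ with rfl | h₂
  · simp
  rw [swap_apply_of_ne_of_ne h₁ h₂]

theorem Equiv.Perm.eq_sign_smul_of_mul_swap_castSucc_succ {M : Type*} [AddCommGroup M] {m : ℕ}
    (f : Perm (Fin (m + 1)) → M) (hf : ∀ ρ (j : Fin m), f (ρ * swap j.castSucc j.succ) = -f ρ)
    (σ : Perm (Fin (m + 1))) : f σ = (sign σ : ℤ) • f 1 := by
  suffices ∀ ρ, f (ρ * σ) = (sign σ : ℤ) • f ρ by simpa using this 1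
  have hσ : σ ∈ Submonoid.closure (Set.range fun j : Fin m => swap j.castSucc j.succ) := by
    rw [Perm.mclosure_swap_castSucc_succ]; trivial
  induction hσ using Submonoid.closure_induction with
  | mem _ hτ =>
    obtain ⟨j, rfl⟩ := hτ
    intro ρ
    rw [hf, sign_swap (Fin.castSucc_lt_succ (i := j)).ne]
    simp
  | one => simp
  | mul τ τ' _ _ ih ih' =>
    intro ρ
    rw [← mul_assoc, ih', ih, smul_smul, sign_mul, Units.val_mul, mul_comm]

namespace OrderedPartition

variable {n k : ℕ}

def ofFibers (f : Fin n → Fin k) (hf : Function.Surjective f) : OrderedPartition n k :=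
  ⟨fun i => {x | f x = i}, fun i => (hf i).imp fun x hx => by simpa using hx,
    fun x => ⟨f x, by simp, fun i hi => by simpa [eq_comm] using hi⟩⟩

theorem nonempty_of_isOrderedPartition_splitBlocks {B : Fin k → Finset (Fin n)} {i : Fin k}
    {A A' : Finset (Fin n)} (h : IsOrderedPartition n (k + 1) (splitBlocks B i A A')) :
    A.Nonempty ∧ A'.Nonempty := by
  have hA := h.1 i.castSucc
  have hA' := h.1 i.succ
  rw [splitBlocks, Function.update_self] at hA
  rw [splitBlocks, Function.update_of_ne (Fin.castSucc_lt_succ (i := i)).ne',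
    Fin.insertNth_apply_same] at hA'
  exact ⟨hA, hA'⟩

variable {m : ℕ}

/-- `({σ 0}, …, {σ m})` with the blocks at positions `j` and `j + 1` merged: the fibres of
`j.predAbove` are the singletons except `{j, j + 1}`. -/
def mergeAdjacent (σ : Perm (Fin (m + 1))) (j : Fin m) : OrderedPartition (m + 1) m :=
  ofFibers (j.predAbove ∘ σ.symm) ((Fin.predAbove_surjective j).comp σ.symm.surjective)

theorem mergeAdjacent_apply_of_ne (σ : Perm (Fin (m + 1))) {i j : Fin m} (h : i ≠ j) :
    (mergeAdjacent σ j).1 i = {σ (j.succ.succAbove i)} := by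
  ext x
  simp [mergeAdjacent, ofFibers, Fin.predAbove_eq_iff_of_ne h, symm_apply_eq]

theorem mergeAdjacent_apply_self (σ : Perm (Fin (m + 1))) (j : Fin m) :
    (mergeAdjacent σ j).1 j = {σ j.castSucc, σ j.succ} := by
  ext x
  simp [mergeAdjacent, ofFibers, Fin.predAbove_eq_self_iff, symm_apply_eq]

theorem mergeAdjacent_mul_swap (σ : Perm (Fin (m + 1))) (j : Fin m) :
    mergeAdjacent (σ * swap j.castSucc j.succ) j = mergeAdjacent σ j := by
  apply Subtype.ext
  funext i
  ext x
  simp [mergeAdjacent, ofFibers, Perm.mul_def, Fin.predAbove_swap_castSucc_succ]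

theorem splitBlocks_mergeAdjacent (σ : Perm (Fin (m + 1))) (j : Fin m) :
    splitBlocks (mergeAdjacent σ j).1 j {σ j.castSucc} {σ j.succ} = (singletonOP (m + 1) σ).1 := by
  funext l
  rcases eq_or_ne l j.castSucc with rfl | h₁
  · simp [splitBlocks, singletonOP]
  rcases eq_or_ne l j.succ with rfl | h₂
  · simp [splitBlocks, singletonOP, Function.update_of_ne h₁]
  obtain ⟨i, rfl⟩ := Fin.exists_succAbove_eq h₂
  have hij : i ≠ j := by rintro rfl; simp at h₁
  simp [splitBlocks, singletonOP, Function.update_of_ne h₁, mergeAdjacent_apply_of_ne σ hij]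

end OrderedPartition

section Differential

variable (K : Type*) [Field K] {n k : ℕ}

open Classical in
noncomputable def splitTerm (B : Fin k → Finset (Fin n)) (i : Fin k) (A : Finset (Fin n)) :
    OPC K n (k + 1) :=
  if h : IsOrderedPartition n (k + 1) (splitBlocks B i A (B i \ A)) then
    ((-1 : K) ^ (i : ℕ)) • Finsupp.single (⟨_, h⟩ : OrderedPartition n (k + 1)) (1 : K)
  else 0

theorem dOP_single (B : OrderedPartition n k) :
    dOP K n k (Finsupp.single B 1) = ∑ i, ∑ A ∈ (B.1 i).powerset, splitTerm K B.1 i A := by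
  rw [dOP, Finsupp.lsum_single, LinearMap.toSpanSingleton_apply, one_smul]
  rfl

variable {K}

theorem splitTerm_eq {B : Fin k → Finset (Fin n)} {i : Fin k} {A : Finset (Fin n)}
    (P : OrderedPartition n (k + 1)) (hP : P.1 = splitBlocks B i A (B i \ A)) :
    splitTerm K B i A = ((-1 : K) ^ (i : ℕ)) • Finsupp.single P 1 := by
  obtain ⟨_, hP'⟩ := P
  subst hP
  exact dif_pos hP'

theorem splitTerm_eq_zero {B : Fin k → Finset (Fin n)} {i : Fin k} {A : Finset (Fin n)}
    (hA : A = ∅ ∨ B i \ A = ∅) : splitTerm K B i A = 0 :=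
  dif_neg fun h => by
    obtain ⟨hA₁, hA₂⟩ := OrderedPartition.nonempty_of_isOrderedPartition_splitBlocks h
    rcases hA with hA | hA <;> simp [hA] at hA₁ hA₂

theorem sum_splitTerm_of_eq_singleton {B : Fin k → Finset (Fin n)} {i : Fin k} {a : Fin n}
    (hB : B i = {a}) : ∑ A ∈ (B i).powerset, splitTerm K B i A = 0 := by
  refine sum_eq_zero fun A hA => splitTerm_eq_zero ?_
  rw [hB, mem_powerset, subset_singleton_iff] at hA
  rcases hA with rfl | rfl
  · exact Or.inl rfl
  · exact Or.inr (by simp [hB])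

theorem sum_splitTerm_of_eq_pair {B : Fin k → Finset (Fin n)} {i : Fin k} {a b : Fin n}
    (hab : a ≠ b) (hB : B i = {a, b}) (P Q : OrderedPartition n (k + 1))
    (hP : P.1 = splitBlocks B i {a} {b}) (hQ : Q.1 = splitBlocks B i {b} {a}) :
    ∑ A ∈ (B i).powerset, splitTerm K B i A =
      ((-1 : K) ^ (i : ℕ)) • (Finsupp.single P 1 + Finsupp.single Q 1) := by
  have hb : {a, b} \ {b} = ({a} : Finset (Fin n)) := insert_sdiff_cancel (by simpa using hab)
  have ha : {a, b} \ {a} = ({b} : Finset (Fin n)) := by grind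
  have hpow : ({b} : Finset (Fin n)).powerset = {∅, {b}} := by grind
  rw [hB, sum_powerset_insert (by simpa using hab), hpow,
    sum_pair (singleton_ne_empty b).symm, sum_pair (singleton_ne_empty _).symm,
    splitTerm_eq_zero (Or.inl rfl), splitTerm_eq_zero (A := {a, b}) (Or.inr (by simp [hB])),
    splitTerm_eq Q (by rw [hB, hb, hQ]), insert_empty, splitTerm_eq P (by rw [hB, ha, hP])]
  simp only [add_zero, smul_add, add_comm]

theorem single_add_single_mul_swap_mem_range_dOP {m : ℕ} (σ : Perm (Fin (m + 1))) (j : Fin m) :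
    Finsupp.single (singletonOP (m + 1) σ) (1 : K) +
        Finsupp.single (singletonOP (m + 1) (σ * swap j.castSucc j.succ)) 1 ∈
      LinearMap.range (dOP K (m + 1) m) := by
  have hne : σ j.castSucc ≠ σ j.succ := σ.injective.ne (Fin.castSucc_lt_succ (i := j)).ne
  have hswap := OrderedPartition.splitBlocks_mergeAdjacent (σ * swap j.castSucc j.succ) j
  rw [OrderedPartition.mergeAdjacent_mul_swap] at hswap
  refine ⟨((-1 : K) ^ (j : ℕ)) • Finsupp.single (OrderedPartition.mergeAdjacent σ j) 1, ?_⟩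
  rw [map_smul, dOP_single, Fintype.sum_eq_single j fun i hij =>
      sum_splitTerm_of_eq_singleton (OrderedPartition.mergeAdjacent_apply_of_ne σ hij),
    sum_splitTerm_of_eq_pair hne (OrderedPartition.mergeAdjacent_apply_self σ j) _ _
      (OrderedPartition.splitBlocks_mergeAdjacent σ j).symm (by simpa using hswap.symm),
    smul_smul, ← pow_add, Even.neg_one_pow ⟨_, rfl⟩, one_smul]

end Differential

theorem statement3_general (K : Type*) [Field K] (m : ℕ)
    (σ : Equiv.Perm (Fin (m + 1))) :
    (Submodule.Quotient.mk (Finsupp.single (singletonOP (m + 1) σ) (1 : K)) :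
        OPC K (m + 1) (m + 1) ⧸ LinearMap.range (dOP K (m + 1) m)) =
      ((Equiv.Perm.sign σ : ℤ) : K) •
        Submodule.Quotient.mk (Finsupp.single (singletonOP (m + 1) 1) (1 : K)) := by
  rw [Int.cast_smul_eq_zsmul]
  refine Perm.eq_sign_smul_of_mul_swap_castSucc_succ
    (fun ρ => Submodule.Quotient.mk (Finsupp.single (singletonOP (m + 1) ρ) (1 : K))) ?_ σ
  intro ρ j
  refine eq_neg_of_add_eq_zero_right ?_
  rw [← Submodule.Quotient.mk_add, Submodule.Quotient.mk_eq_zero]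
  exact single_add_single_mul_swap_mem_range_dOP ρ j

/-- for every permutation `σ ∈ S_n`, the class of the singleton ordered
partition `({σ(1)}, …, {σ(n)})` in `C^n / im(d : C^{n−1} → C^n)` equals `sgn(σ)` times
the class of `({1}, {2}, …, {n})`.  (Here `n ≥ 1` is written as `m + 1`.) -/
theorem statement3 (K : Type*) [Field K] [CharZero K] (m : ℕ)
    (σ : Equiv.Perm (Fin (m + 1))) :
    (Submodule.Quotient.mk (Finsupp.single (singletonOP (m + 1) σ) (1 : K)) :
        OPC K (m + 1) (m + 1) ⧸ LinearMap.range (dOP K (m + 1) m)) =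
      ((Equiv.Perm.sign σ : ℤ) : K) •
        Submodule.Quotient.mk (Finsupp.single (singletonOP (m + 1) 1) (1 : K)) :=
  statement3_general K m σ
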